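/- For φ ∈ L^p(Ω;M), φ is (a.e. equal to) a ℬ-measurable function in L^p(Ω,ℬ,P;M) if and only if E_ℬ^β(φ) = φ almost everywhere. In particular E_ℬ^β is idempotent: E_ℬ^β(E_ℬ^β(φ)) = E_ℬ^β(φ). -/

import Mathlib

open MeasureTheory ENNReal Filter Topology

noncomputable section

variable {Ω M : Type*}

/-- A coupling of two measures on `M`. -/
def IsCoupling [MeasurableSpace M] (π : MeasureTheory.Measure (M × M))
    (μ ν : MeasureTheory.Measure M) : Prop :=
  π.map Prod.fst = μ ∧ π.map Prod.snd = ν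

/-- The `p`-Wasserstein (extended) distance between two measures. -/
def wassDist [MeasurableSpace M] [PseudoEMetricSpace M] (p : ℝ)
    (μ ν : MeasureTheory.Measure M) : ℝ≥0∞ :=
  ⨅ (π : MeasureTheory.Measure (M × M)) (_ : IsCoupling π μ ν),
    (∫⁻ xy, edist xy.1 xy.2 ^ p ∂π) ^ (1 / p)

/-- Finite `p`-th moment. -/
def HasFinitePMoment [MeasurableSpace M] [PseudoEMetricSpace M] (p : ℝ)
    (μ : MeasureTheory.Measure M) : Prop :=
  ∀ x : M, ∫⁻ y, edist x y ^ p ∂μ < ⊤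

/-- `p`-th Bochner integrability of an `M`-valued function. -/
def PIntegrable {mΩ : MeasurableSpace Ω} [PseudoEMetricSpace M] (p : ℝ)
    (P : MeasureTheory.Measure Ω) (φ : Ω → M) : Prop :=
  MeasureTheory.AEStronglyMeasurable φ P ∧ ∀ x : M, ∫⁻ ω, edist x (φ ω) ^ p ∂P < ⊤

/-- A `p`-contractive barycentric map. -/
structure IsBarycentric [MeasurableSpace M] [PseudoEMetricSpace M] (p : ℝ)
    (β : MeasureTheory.Measure M → M) : Prop where
  map_dirac : ∀ x : M, β (MeasureTheory.Measure.dirac x) = x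
  contract : ∀ μ ν : MeasureTheory.Measure M, MeasureTheory.IsProbabilityMeasure μ →
    MeasureTheory.IsProbabilityMeasure ν → HasFinitePMoment p μ → HasFinitePMoment p ν →
    edist (β μ) (β ν) ≤ wassDist p μ ν

/-- A disintegration of `P` with respect to the sub-σ-algebra `ℬ`:
a family of probability measures `K ω` (on the ambient σ-algebra) such that for
every measurable `A`, `ω ↦ K ω A` is `ℬ`-measurable and is a version of the
conditional expectation of the indicator of `A` with respect to `ℬ`. -/
def IsDisintegration {mΩ : MeasurableSpace Ω} (P : @MeasureTheory.Measure Ω mΩ)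
    (ℬ : MeasurableSpace Ω) (K : Ω → @MeasureTheory.Measure Ω mΩ) : Prop :=
  (∀ ω, MeasureTheory.IsProbabilityMeasure (K ω)) ∧
  ∀ A : Set Ω, MeasurableSet[mΩ] A →
    Measurable[ℬ] (fun ω => (K ω A).toReal) ∧
    (fun ω => (K ω A).toReal) =ᵐ[P] P[A.indicator (fun _ => (1 : ℝ)) | ℬ]

/-- The `β`-conditional expectation `ω ↦ β (φ_* P_ω)` defined from a
disintegration `K` of `P`. -/
def condBary {mΩ : MeasurableSpace Ω} [MeasurableSpace M] [PseudoEMetricSpace M]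
    (β : MeasureTheory.Measure M → M) (K : Ω → @MeasureTheory.Measure Ω mΩ)
    (φ : Ω → M) (ω : Ω) : M :=
  β ((K ω).map φ)

/-!
If `ψ` is `ℬ`-measurable, then for `P`-a.e. `ω` the measure `P_ω` is carried by `{ψ = ψ ω}`:
test it against the countably many `ℬ`-sets `ψ ⁻¹' ball c r` with `c` in a countable dense
subset of the range and `r` rational. Hence `ψ_* P_ω = δ (ψ ω)` and `β` returns `ψ ω`.

Conversely `E_ℬ^β φ` always has a `ℬ`-measurable version. For a simple function `s`,
`ω ↦ β (s_* P_ω)` is a continuous function of the finitely many `ℬ`-measurable weights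
`P_ω (s ⁻¹' {z})`, by `p`-contractivity and an explicit coupling of two discrete measures on
the same atoms. For simple `s_n → φ`, contractivity bounds the distance from
`β ((s_n)_* P_ω)` to `β (φ_* P_ω)` by the `L^p(P_ω)` distance of `s_n` and `φ`, which tends to
`0` by dominated convergence. A fixed point of `E_ℬ^β` is thus a.e. equal to a `ℬ`-measurable
function, and `E_ℬ^β φ` is itself a fixed point.
-/

lemma dist_eq_zero_of_forall_mem_ball_imp_mem [PseudoMetricSpace M] {T : Set M} {x y : M}
    (hy : y ∈ closure T) (h : ∀ c ∈ T, ∀ r : ℚ, y ∈ Metric.ball c r → x ∈ Metric.ball c r) :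
    dist x y = 0 := by
  by_contra hxy
  obtain ⟨r, hr0, hr⟩ := exists_rat_btwn (half_pos ((dist_nonneg).lt_of_ne' hxy))
  obtain ⟨c, hcT, hyc⟩ := Metric.mem_closure_iff.1 hy r (by exact_mod_cast hr0)
  have hxc := h c hcT r (Metric.mem_ball.2 hyc)
  linarith [dist_triangle x c y, dist_comm c y, Metric.mem_ball.1 hxc]

namespace IsDisintegration

variable {ℬ mΩ : MeasurableSpace Ω} {P : Measure Ω} {K : Ω → Measure Ω}

lemma measurable_apply (hK : IsDisintegration P ℬ K) {A : Set Ω} (hA : MeasurableSet A) :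
    Measurable[ℬ] fun ω => K ω A := by
  have : (fun ω => K ω A) = fun ω => ENNReal.ofReal (K ω A).toReal := by
    ext ω
    have := hK.1 ω
    rw [ofReal_toReal (measure_ne_top _ _)]
  rw [this]
  exact ENNReal.measurable_ofReal.comp (hK.2 A hA).1

lemma measurable (hK : IsDisintegration P ℬ K) : Measurable[ℬ] K :=
  Measure.measurable_of_measurable_coe K fun _ hA => hK.measurable_apply hA

lemma lintegral_apply (hℬ : ℬ ≤ mΩ) [IsFiniteMeasure P] (hK : IsDisintegration P ℬ K)
    {A : Set Ω} (hA : MeasurableSet A) : ∫⁻ ω, K ω A ∂P = P A := by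
  have hprob := hK.1
  have hint : Integrable (fun ω => (K ω A).toReal) P :=
    (integrable_const (1 : ℝ)).mono' ((hK.2 A hA).1.mono hℬ le_rfl).aestronglyMeasurable
      (Eventually.of_forall fun ω => by simp [abs_of_nonneg, toReal_le_of_le_ofReal, prob_le_one])
  calc ∫⁻ ω, K ω A ∂P = ∫⁻ ω, ENNReal.ofReal (K ω A).toReal ∂P :=
        lintegral_congr fun ω => (ofReal_toReal (measure_ne_top _ _)).symm
    _ = ENNReal.ofReal (∫ ω, A.indicator (fun _ => (1 : ℝ)) ω ∂P) := by
        rw [← ofReal_integral_eq_lintegral_ofReal hint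
            (Eventually.of_forall fun _ => toReal_nonneg),
          integral_congr_ae (hK.2 A hA).2, integral_condExp hℬ]
    _ = P A := by
        rw [integral_indicator_const _ hA, smul_eq_mul, mul_one, measureReal_def,
          ofReal_toReal (measure_ne_top _ _)]

lemma bind_eq (hℬ : ℬ ≤ mΩ) [IsFiniteMeasure P] (hK : IsDisintegration P ℬ K) :
    P.bind K = P :=
  Measure.ext fun _ hA => by
    rw [Measure.bind_apply hA (hK.measurable.mono hℬ le_rfl).aemeasurable,
      hK.lintegral_apply hℬ hA]

lemma lintegral_lintegral (hℬ : ℬ ≤ mΩ) [IsFiniteMeasure P] (hK : IsDisintegration P ℬ K)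
    {f : Ω → ℝ≥0∞} (hf : AEMeasurable f P) :
    ∫⁻ ω, ∫⁻ ω', f ω' ∂K ω ∂P = ∫⁻ ω, f ω ∂P := by
  rw [← Measure.lintegral_bind (hK.measurable.mono hℬ le_rfl).aemeasurable
    (by rwa [hK.bind_eq hℬ]), hK.bind_eq hℬ]

lemma ae_ae_of_ae (hℬ : ℬ ≤ mΩ) [IsFiniteMeasure P] (hK : IsDisintegration P ℬ K)
    {q : Ω → Prop} (h : ∀ᵐ ω ∂P, q ω) : ∀ᵐ ω ∂P, ∀ᵐ ω' ∂K ω, q ω' :=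
  Measure.ae_ae_of_ae_bind (hK.measurable.mono hℬ le_rfl).aemeasurable
    (by rwa [hK.bind_eq hℬ])

lemma ae_apply_eq_zero_of_notMem (hℬ : ℬ ≤ mΩ) [IsFiniteMeasure P]
    (hK : IsDisintegration P ℬ K) {A : Set Ω} (hA : MeasurableSet[ℬ] A) :
    ∀ᵐ ω ∂P, ω ∉ A → K ω A = 0 := by
  have hce : P[A.indicator (fun _ => (1 : ℝ)) | ℬ] = A.indicator fun _ => 1 :=
    condExp_of_stronglyMeasurable hℬ (stronglyMeasurable_const.indicator hA)
      ((integrable_const _).indicator (hℬ A hA))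
  filter_upwards [(hK.2 A (hℬ A hA)).2] with ω hω hωA
  have := hK.1 ω
  rw [hce, Set.indicator_of_notMem hωA, toReal_eq_zero_iff] at hω
  exact hω.resolve_right (measure_ne_top _ _)

lemma ae_ae_mem_imp_mem (hℬ : ℬ ≤ mΩ) [IsFiniteMeasure P] (hK : IsDisintegration P ℬ K)
    {ι : Type*} [Countable ι] {A : ι → Set Ω} (hA : ∀ i, MeasurableSet[ℬ] (A i)) :
    ∀ᵐ ω ∂P, ∀ᵐ ω' ∂K ω, ∀ i, ω' ∈ A i → ω ∈ A i := by
  filter_upwards [ae_all_iff.2 fun i => hK.ae_apply_eq_zero_of_notMem hℬ (hA i)] with ω hω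
  refine ae_all_iff.2 fun i => ?_
  by_cases hωA : ω ∈ A i
  · exact Eventually.of_forall fun _ _ => hωA
  · filter_upwards [measure_eq_zero_iff_ae_notMem.1 (hω i hωA)] with ω' hω' h using
      absurd h hω'

lemma ae_ae_eq_of_stronglyMeasurable [MetricSpace M] (hℬ : ℬ ≤ mΩ) [IsFiniteMeasure P]
    (hK : IsDisintegration P ℬ K) {ψ : Ω → M} (hψ : StronglyMeasurable[ℬ] ψ) :
    ∀ᵐ ω ∂P, ∀ᵐ ω' ∂K ω, ψ ω' = ψ ω := by
  borelize M
  obtain ⟨T, hTc, hT⟩ := hψ.isSeparable_range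
  have := hTc.to_subtype
  filter_upwards [hK.ae_ae_mem_imp_mem hℬ (A := fun i : T × ℚ => ψ ⁻¹' Metric.ball i.1 i.2)
    fun _ => hψ.measurable Metric.isOpen_ball.measurableSet] with ω hω
  filter_upwards [hω] with ω' hω'
  exact (dist_eq_zero.1 (dist_eq_zero_of_forall_mem_ball_imp_mem (hT ⟨ω', rfl⟩)
    fun c hc r => hω' (⟨c, hc⟩, r))).symm

lemma ae_map_eq_dirac [MetricSpace M] [MeasurableSpace M] (hℬ : ℬ ≤ mΩ) [IsFiniteMeasure P]
    (hK : IsDisintegration P ℬ K) {ψ : Ω → M} (hψ : StronglyMeasurable[ℬ] ψ) :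
    ∀ᵐ ω ∂P, (K ω).map ψ = Measure.dirac (ψ ω) := by
  filter_upwards [hK.ae_ae_eq_of_stronglyMeasurable hℬ hψ] with ω hω
  have := hK.1 ω
  rw [Measure.map_congr hω, Measure.map_const, measure_univ, one_smul]

lemma condBary_congr_ae [MeasurableSpace M] [PseudoEMetricSpace M] (hℬ : ℬ ≤ mΩ)
    [IsFiniteMeasure P] (hK : IsDisintegration P ℬ K) (β : Measure M → M) {f g : Ω → M}
    (hfg : f =ᵐ[P] g) : condBary β K f =ᵐ[P] condBary β K g := by
  filter_upwards [hK.ae_ae_of_ae hℬ hfg] with ω hω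
  exact congrArg β (Measure.map_congr hω)

lemma condBary_ae_eq_self [MetricSpace M] [MeasurableSpace M] (hℬ : ℬ ≤ mΩ)
    [IsFiniteMeasure P] (hK : IsDisintegration P ℬ K) {β : Measure M → M}
    (hβ : ∀ x, β (Measure.dirac x) = x) {f ψ : Ω → M} (hψ : StronglyMeasurable[ℬ] ψ)
    (hfψ : f =ᵐ[P] ψ) : condBary β K f =ᵐ[P] f := by
  filter_upwards [hK.condBary_congr_ae hℬ β hfψ, hK.ae_map_eq_dirac hℬ hψ, hfψ]
    with ω h₁ h₂ h₃
  rw [h₁, condBary, h₂, hβ, h₃]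

end IsDisintegration

section Wasserstein

variable [MeasurableSpace M] [PseudoEMetricSpace M] {p : ℝ}

lemma wassDist_le_of_isCoupling {μ ν : Measure M} {π : Measure (M × M)}
    (h : IsCoupling π μ ν) : wassDist p μ ν ≤ (∫⁻ xy, edist xy.1 xy.2 ^ p ∂π) ^ (1 / p) :=
  iInf₂_le π h

lemma wassDist_map_le (hp : 0 ≤ p) {α : Type*} [MeasurableSpace α] (μ : Measure α)
    {f g : α → M} (hf : Measurable f) (hg : Measurable g) :
    wassDist p (μ.map f) (μ.map g) ≤ (∫⁻ a, edist (f a) (g a) ^ p ∂μ) ^ (1 / p) := by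
  have hfg : Measurable fun a => (f a, g a) := hf.prodMk hg
  refine (wassDist_le_of_isCoupling (π := μ.map fun a => (f a, g a)) ⟨?_, ?_⟩).trans
    (rpow_le_rpow (lintegral_map_le _ _) (by positivity))
  · rw [Measure.map_map measurable_fst hfg]; rfl
  · rw [Measure.map_map measurable_snd hfg]; rfl

/-- Couple the common part `α` along the diagonal and the remainders `μ`, `ν`, of equal
mass `t`, by the normalized product `t⁻¹ • μ.prod ν`. -/
lemma wassDist_add_add_le (hp : 0 < p) (α : Measure M) {μ ν : Measure M}
    [IsFiniteMeasure μ] [IsFiniteMeasure ν] (hμν : μ Set.univ = ν Set.univ) :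
    wassDist p (α + μ) (α + ν) ≤
      ((μ Set.univ)⁻¹ * ∫⁻ x, ∫⁻ y, edist x y ^ p ∂ν ∂μ) ^ (1 / p) := by
  set t := μ Set.univ
  have hdiag : Measurable fun x : M => (x, x) := measurable_id.prodMk measurable_id
  have hcancel : ∀ ρ : Measure M, ρ Set.univ = t → t⁻¹ • t • ρ = ρ := by
    intro ρ hρ
    by_cases ht : t = 0
    · rw [Measure.measure_univ_eq_zero.1 (hρ.trans ht), smul_zero, smul_zero]
    · rw [smul_smul, ENNReal.inv_mul_cancel ht (measure_ne_top _ _), one_smul]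
  have hfst : Prod.fst ∘ (fun x : M => (x, x)) = id := rfl
  have hsnd : Prod.snd ∘ (fun x : M => (x, x)) = id := rfl
  have hc : IsCoupling (α.map (fun x => (x, x)) + t⁻¹ • μ.prod ν) (α + μ) (α + ν) := by
    constructor
    · rw [Measure.map_add _ _ measurable_fst, Measure.map_smul,
        Measure.map_map measurable_fst hdiag, hfst, Measure.map_id, Measure.map_fst_prod, ← hμν,
        hcancel μ rfl]
    · rw [Measure.map_add _ _ measurable_snd, Measure.map_smul,
        Measure.map_map measurable_snd hdiag, hsnd, Measure.map_id, Measure.map_snd_prod,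
        hcancel ν hμν.symm]
  refine (wassDist_le_of_isCoupling hc).trans (rpow_le_rpow ?_ (by positivity))
  rw [lintegral_add_measure, lintegral_smul_measure, smul_eq_mul]
  calc _ ≤ ∫⁻ x, edist x x ^ p ∂α + t⁻¹ * ∫⁻ x, ∫⁻ y, edist x y ^ p ∂ν ∂μ := by
        gcongr
        exacts [lintegral_map_le (fun xy : M × M => edist xy.1 xy.2 ^ p) _,
          lintegral_prod_le (fun xy : M × M => edist xy.1 xy.2 ^ p)]
    _ = _ := by simp [zero_rpow_of_pos hp]

end Wasserstein

lemma hasFinitePMoment_of_lintegral_lt_top [MeasurableSpace M] [PseudoMetricSpace M] {p : ℝ}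
    (hp : 1 ≤ p) {μ : Measure M} [IsFiniteMeasure μ] {y₀ : M} (h : ∫⁻ y, edist y₀ y ^ p ∂μ < ⊤) : HasFinitePMoment p μ := by
  intro x
  have hconst : ∫⁻ _y, edist x y₀ ^ p ∂μ < ⊤ := by
    rw [lintegral_const]
    exact mul_lt_top (rpow_lt_top_of_nonneg (by linarith) (edist_ne_top _ _)) (measure_lt_top _ _)
  calc ∫⁻ y, edist x y ^ p ∂μ ≤ ∫⁻ y, (edist x y₀ + edist y₀ y) ^ p ∂μ :=
        lintegral_mono fun y => rpow_le_rpow (edist_triangle _ _ _) (by linarith)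
    _ < ⊤ := lintegral_rpow_add_lt_top_of_lintegral_rpow_lt_top aemeasurable_const hconst h hp

section DiscreteMeasure

variable [MeasurableSpace M] {p : ℝ} {ι : Type*} [Fintype ι]

def discreteMeasure (y : ι → M) (w : ι → ℝ≥0∞) : Measure M :=
  ∑ i, w i • Measure.dirac (y i)

lemma discreteMeasure_add (y : ι → M) (w v : ι → ℝ≥0∞) :
    discreteMeasure y (w + v) = discreteMeasure y w + discreteMeasure y v := by
  simp [discreteMeasure, add_smul, Finset.sum_add_distrib]

lemma ne_top_of_sum_eq_one {u : ι → ℝ≥0∞} (hu : ∑ i, u i = 1) (i : ι) : u i ≠ ⊤ :=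
  sum_ne_top.1 (hu.symm ▸ one_ne_top) i (Finset.mem_univ i)

variable [MeasurableSingletonClass M]

lemma lintegral_discreteMeasure (y : ι → M) (w : ι → ℝ≥0∞) (f : M → ℝ≥0∞) :
    ∫⁻ z, f z ∂discreteMeasure y w = ∑ i, w i * f (y i) := by
  simp [discreteMeasure]

lemma discreteMeasure_apply_univ (y : ι → M) (w : ι → ℝ≥0∞) :
    discreteMeasure y w Set.univ = ∑ i, w i := by
  simpa using lintegral_discreteMeasure y w 1

lemma isFiniteMeasure_discreteMeasure (y : ι → M) {w : ι → ℝ≥0∞} (hw : ∀ i, w i ≠ ⊤) :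
    IsFiniteMeasure (discreteMeasure y w) :=
  ⟨by simpa [discreteMeasure_apply_univ, lt_top_iff_ne_top] using hw⟩

lemma hasFinitePMoment_discreteMeasure [PseudoMetricSpace M] (hp : 0 ≤ p) (y : ι → M)
    {w : ι → ℝ≥0∞} (hw : ∀ i, w i ≠ ⊤) : HasFinitePMoment p (discreteMeasure y w) := fun x => by
  rw [lintegral_discreteMeasure]
  exact sum_lt_top.2 fun i _ =>
    mul_lt_top (hw i).lt_top (rpow_lt_top_of_nonneg hp (edist_ne_top _ _))

lemma wassDist_discreteMeasure_le [PseudoEMetricSpace M] (hp : 0 < p) (y : ι → M)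
    {w v : ι → ℝ≥0∞} (hw : ∑ i, w i = 1) (hv : ∑ i, v i = 1) :
    wassDist p (discreteMeasure y w) (discreteMeasure y v) ≤
      ((∑ i, (w i - v i)) * ∑ i, ∑ j, edist (y i) (y j) ^ p) ^ (1 / p) := by
  set m : ι → ℝ≥0∞ := fun i => min (w i) (v i)
  set r : ι → ℝ≥0∞ := fun i => w i - v i
  set s : ι → ℝ≥0∞ := fun i => v i - w i
  set t := ∑ i, r i
  set D := ∑ i, ∑ j, edist (y i) (y j) ^ p
  have hwm : w = r + m := funext fun i => tsub_add_min.symm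
  have hvm : v = s + m := funext fun i => by
    rw [Pi.add_apply, show m i = min (v i) (w i) from min_comm _ _]
    exact tsub_add_min.symm
  have hr : ∀ i, r i ≠ ⊤ := fun i => ne_top_of_le_ne_top (ne_top_of_sum_eq_one hw i) tsub_le_self
  have hs : ∀ i, s i ≠ ⊤ := fun i => ne_top_of_le_ne_top (ne_top_of_sum_eq_one hv i) tsub_le_self
  have hm : ∑ i, m i ≠ ⊤ := sum_ne_top.2 fun i _ =>
    ne_top_of_le_ne_top (ne_top_of_sum_eq_one hw i) (min_le_left _ _)
  have hst : ∑ i, s i = t := by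
    refine (ENNReal.add_left_inj hm).1 ?_
    rw [← Finset.sum_add_distrib, ← Finset.sum_add_distrib]
    simp only [← Pi.add_apply, ← hvm, ← hwm, hv, hw]
  have := isFiniteMeasure_discreteMeasure y hr
  have := isFiniteMeasure_discreteMeasure y hs
  rw [hwm, hvm, discreteMeasure_add, discreteMeasure_add, add_comm, add_comm (discreteMeasure y s)]
  refine (wassDist_add_add_le hp _ (by simp [discreteMeasure_apply_univ, hst, t])).trans
    (rpow_le_rpow ?_ (by positivity))
  have hcost :
      ∫⁻ x, ∫⁻ z, edist x z ^ p ∂discreteMeasure y s ∂discreteMeasure y r ≤ t * (t * D) := by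
    simp only [lintegral_discreteMeasure]
    calc ∑ i, r i * ∑ j, s j * edist (y i) (y j) ^ p ≤ ∑ i, r i * ∑ j, s j * D := by
          gcongr with i _ j _
          exact Finset.single_le_sum (f := fun j => edist (y i) (y j) ^ p) (fun _ _ => zero_le)
            (Finset.mem_univ j) |>.trans (Finset.single_le_sum
              (f := fun i => ∑ j, edist (y i) (y j) ^ p) (fun _ _ => zero_le) (Finset.mem_univ i))
      _ = t * (t * D) := by rw [← Finset.sum_mul, ← Finset.sum_mul, hst]
  rw [discreteMeasure_apply_univ]
  calc t⁻¹ * _ ≤ t⁻¹ * (t * (t * D)) := by gcongr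
    _ ≤ t * D := by
      by_cases ht : t = 0
      · simp [ht]
      · rw [ENNReal.inv_mul_cancel_left ht (sum_ne_top.2 fun i _ => hr i)]

lemma map_simpleFunc_eq_discreteMeasure {α : Type*} [MeasurableSpace α] (μ : Measure α)
    (s : SimpleFunc α M) :
    μ.map s = discreteMeasure (fun z : s.range => (z : M)) fun z => μ (s ⁻¹' {(z : M)}) := by
  rw [(Measure.ae_mem_finset_iff_map_eq_sum_dirac s.measurable.aemeasurable).1
    (ae_of_all _ s.mem_range_self), discreteMeasure,
    Finset.sum_coe_sort s.range fun z => μ (s ⁻¹' {z}) • Measure.dirac z]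

end DiscreteMeasure

section Barycenter

variable [MetricSpace M] [MeasurableSpace M] [BorelSpace M] {p : ℝ} {β : Measure M → M}

lemma continuous_bary_discreteMeasure (hp : 0 < p) (hβ : IsBarycentric p β) {ι : Type*}
    [Fintype ι] (y : ι → M) :
    Continuous fun w : stdSimplex ℝ≥0∞ ι => β (discreteMeasure y w) := by
  refine continuous_iff_continuousAt.2 fun v => tendsto_iff_edist_tendsto_0.2 ?_
  set D := ∑ i, ∑ j, edist (y i) (y j) ^ p
  have hD : D ≠ ⊤ := sum_ne_top.2 fun i _ => sum_ne_top.2 fun j _ =>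
    rpow_ne_top_of_nonneg hp.le (edist_ne_top _ _)
  have hbound : ∀ w : stdSimplex ℝ≥0∞ ι,
      edist (β (discreteMeasure y w)) (β (discreteMeasure y v)) ≤
        ((∑ i, (w.1 i - v.1 i)) * D) ^ (1 / p) := fun w =>
    (hβ.contract _ _ ⟨by rw [discreteMeasure_apply_univ, w.2.2]⟩
      ⟨by rw [discreteMeasure_apply_univ, v.2.2]⟩
      (hasFinitePMoment_discreteMeasure hp.le y (ne_top_of_sum_eq_one w.2.2))
      (hasFinitePMoment_discreteMeasure hp.le y (ne_top_of_sum_eq_one v.2.2))).trans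
      (wassDist_discreteMeasure_le hp y w.2.2 v.2.2)
  have hcont : Continuous fun w : stdSimplex ℝ≥0∞ ι =>
      ((∑ i, (w.1 i - v.1 i)) * D) ^ (1 / p) :=
    ENNReal.continuous_rpow_const.comp <| (ENNReal.continuous_mul_const hD).comp <|
      continuous_finsetSum _ fun i _ =>
        (ENNReal.continuous_sub_right _).comp ((continuous_apply i).comp continuous_subtype_val)
  refine tendsto_nhds_bot_mono' ?_ hbound
  simpa [zero_rpow_of_pos (inv_pos.2 hp)] using hcont.tendsto v

lemma IsDisintegration.stronglyMeasurable_condBary_simpleFunc {ℬ mΩ : MeasurableSpace Ω}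
    {P : Measure Ω} {K : Ω → Measure Ω} (hK : IsDisintegration P ℬ K) (hp : 0 < p)
    (hβ : IsBarycentric p β) (s : SimpleFunc Ω M) : StronglyMeasurable[ℬ] (condBary β K s) := by
  let weights (ω : Ω) : stdSimplex ℝ≥0∞ s.range :=
    ⟨fun z => K ω (s ⁻¹' {(z : M)}), fun _ => zero_le, by
      have := hK.1 ω
      rw [Finset.sum_coe_sort s.range fun z => K ω (s ⁻¹' {z}),
        s.sum_range_measure_preimage_singleton, measure_univ]⟩
  have hweights : Measurable[ℬ] weights :=
    (@measurable_pi_lambda Ω s.range (fun _ => ℝ≥0∞) ℬ _ _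
      fun z => hK.measurable_apply (s.measurableSet_fiber _)).subtype_mk
  have : condBary β K s = (fun w => β (discreteMeasure _ w.1)) ∘ weights :=
    funext fun ω => congrArg β (map_simpleFunc_eq_discreteMeasure (K ω) s)
  rw [this]
  exact (continuous_bary_discreteMeasure hp hβ _).comp_stronglyMeasurable
    hweights.stronglyMeasurable

lemma tendsto_bary_map_approxOn (hp : 1 ≤ p) (hβ : IsBarycentric p β) {α : Type*}
    [MeasurableSpace α] (ν : Measure α) [IsProbabilityMeasure ν] {f : α → M}
    (hf : StronglyMeasurable f) {s : Set M} [TopologicalSpace.SeparableSpace s] {y₀ : M}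
    (h₀ : y₀ ∈ s) (hfs : ∀ a, f a ∈ closure s) (hmom : ∫⁻ a, edist y₀ (f a) ^ p ∂ν < ⊤) :
    Tendsto (fun n => β (ν.map (SimpleFunc.approxOn f hf.measurable s y₀ h₀ n))) atTop
      (𝓝 (β (ν.map f))) := by
  have hp0 : 0 < p := zero_lt_one.trans_le hp
  set F := SimpleFunc.approxOn f hf.measurable s y₀ h₀
  have hbound : ∀ n, edist (β (ν.map (F n))) (β (ν.map f)) ≤
      (∫⁻ a, edist (F n a) (f a) ^ p ∂ν) ^ (1 / p) := fun n => by
    have := Measure.isProbabilityMeasure_map (μ := ν) (F n).measurable.aemeasurable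
    have := Measure.isProbabilityMeasure_map (μ := ν) hf.measurable.aemeasurable
    refine (hβ.contract _ _ inferInstance inferInstance ?_ ?_).trans
      (wassDist_map_le hp0.le ν (F n).measurable hf.measurable)
    · rw [map_simpleFunc_eq_discreteMeasure]
      exact hasFinitePMoment_discreteMeasure hp0.le _ fun _ => measure_ne_top _ _
    · exact hasFinitePMoment_of_lintegral_lt_top hp ((lintegral_map_le _ _).trans_lt hmom)
  have hcost : Tendsto (fun n => ∫⁻ a, edist (F n a) (f a) ^ p ∂ν) atTop (𝓝 0) := by
    simpa using tendsto_lintegral_of_dominated_convergence (f := 0) _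
      (fun n => ((F n).stronglyMeasurable.edist hf).measurable.pow_const p)
      (fun n => ae_of_all _ fun a =>
        rpow_le_rpow (SimpleFunc.edist_approxOn_le hf.measurable h₀ a n) hp0.le) hmom.ne
      (ae_of_all _ fun a => by
        simpa [Function.comp_def, zero_rpow_of_pos hp0] using
          ((ENNReal.continuous_rpow_const (y := p)).tendsto 0).comp
            (tendsto_iff_edist_tendsto_0.1 (SimpleFunc.tendsto_approxOn hf.measurable h₀ (hfs a))))
  refine tendsto_iff_edist_tendsto_0.2 (tendsto_nhds_bot_mono' ?_ hbound)
  simpa [Function.comp_def, zero_rpow_of_pos (inv_pos.2 hp0)] using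
    ((ENNReal.continuous_rpow_const (y := 1 / p)).tendsto 0).comp hcost

end Barycenter

lemma IsDisintegration.exists_stronglyMeasurable_ae_eq_condBary [MetricSpace M]
    [CompleteSpace M] [MeasurableSpace M] [BorelSpace M] {ℬ mΩ : MeasurableSpace Ω}
    {P : Measure Ω} [IsProbabilityMeasure P] {K : Ω → Measure Ω} (hℬ : ℬ ≤ mΩ)
    (hK : IsDisintegration P ℬ K) {p : ℝ} (hp : 1 ≤ p) {β : Measure M → M}
    (hβ : IsBarycentric p β) {φ : Ω → M} (hφ : PIntegrable p P φ) :
    ∃ ψ : Ω → M, StronglyMeasurable[ℬ] ψ ∧ condBary β K φ =ᵐ[P] ψ := by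
  obtain ⟨ω₀⟩ := nonempty_of_isProbabilityMeasure P
  set φ' := hφ.1.mk φ
  have hφ' : StronglyMeasurable φ' := hφ.1.stronglyMeasurable_mk
  set y₀ := φ' ω₀
  have := hφ'.isSeparable_range.separableSpace
  set F := SimpleFunc.approxOn φ' hφ'.measurable (Set.range φ') y₀ ⟨ω₀, rfl⟩
  have hmom : ∀ᵐ ω ∂P, ∫⁻ ω', edist y₀ (φ' ω') ^ p ∂K ω < ⊤ := by
    have hg : Measurable fun ω' => edist y₀ (φ' ω') ^ p :=
      (stronglyMeasurable_const.edist hφ').measurable.pow_const p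
    refine ae_lt_top ((Measure.measurable_lintegral hg).comp (hK.measurable.mono hℬ le_rfl)) ?_
    rw [hK.lintegral_lintegral hℬ hg.aemeasurable]
    exact ne_of_eq_of_ne (lintegral_congr_ae (hφ.1.ae_eq_mk.fun_comp fun x => edist y₀ x ^ p)).symm
      (hφ.2 y₀).ne
  have hlim : ∀ᵐ ω ∂P, Tendsto (fun n => condBary β K (F n) ω) atTop
      (𝓝 (condBary β K φ' ω)) := by
    filter_upwards [hmom] with ω hω
    have := hK.1 ω
    exact tendsto_bary_map_approxOn hp hβ (K ω) hφ' _ (fun ω' => subset_closure ⟨ω', rfl⟩) hω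
  have : Nonempty M := ⟨y₀⟩
  refine ⟨fun ω => limUnder atTop fun n => condBary β K (F n) ω,
    @StronglyMeasurable.limUnder _ _ _ ℬ _ _ _ _ _ _ _
      fun n => hK.stronglyMeasurable_condBary_simpleFunc (zero_lt_one.trans_le hp) hβ (F n), ?_⟩
  filter_upwards [hK.condBary_congr_ae hℬ β hφ.1.ae_eq_mk, hlim] with ω h₁ h₂
  rw [h₁, h₂.limUnder_eq]

theorem stmt9_general [mΩ : MeasurableSpace Ω]
    [MetricSpace M] [CompleteSpace M] [MeasurableSpace M] [BorelSpace M]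
    (P : MeasureTheory.Measure Ω) [MeasureTheory.IsProbabilityMeasure P]
    (ℬ : MeasurableSpace Ω) (hℬ : ℬ ≤ mΩ)
    (K : Ω → @MeasureTheory.Measure Ω mΩ) (hK : IsDisintegration P ℬ K)
    (p : ℝ) (hp : 1 ≤ p) (β : MeasureTheory.Measure M → M) (hβ : IsBarycentric p β)
    (φ : Ω → M) (hφ : PIntegrable p P φ) :
    ((∃ ψ : Ω → M, (@MeasureTheory.StronglyMeasurable Ω M _ ℬ ψ) ∧ φ =ᵐ[P] ψ) ↔
      condBary β K φ =ᵐ[P] φ) ∧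
    condBary β K (condBary β K φ) =ᵐ[P] condBary β K φ := by
  obtain ⟨ψ, hψ, hφψ⟩ := hK.exists_stronglyMeasurable_ae_eq_condBary hℬ hp hβ hφ
  refine ⟨⟨fun ⟨χ, hχ, hφχ⟩ => hK.condBary_ae_eq_self hℬ hβ.map_dirac hχ hφχ,
    fun hfix => ⟨ψ, hψ, hfix.symm.trans hφψ⟩⟩, hK.condBary_ae_eq_self hℬ hβ.map_dirac hψ hφψ⟩

theorem stmt9 [mΩ : MeasurableSpace Ω] [StandardBorelSpace Ω]
    [MetricSpace M] [CompleteSpace M] [MeasurableSpace M] [BorelSpace M]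
    (P : MeasureTheory.Measure Ω) [MeasureTheory.IsProbabilityMeasure P]
    (ℬ : MeasurableSpace Ω) (hℬ : ℬ ≤ mΩ)
    (K : Ω → @MeasureTheory.Measure Ω mΩ) (hK : IsDisintegration P ℬ K)
    (p : ℝ) (hp : 1 ≤ p) (β : MeasureTheory.Measure M → M) (hβ : IsBarycentric p β)
    (φ : Ω → M) (hφ : PIntegrable p P φ) :
    ((∃ ψ : Ω → M, (@MeasureTheory.StronglyMeasurable Ω M _ ℬ ψ) ∧ φ =ᵐ[P] ψ) ↔
      condBary β K φ =ᵐ[P] φ) ∧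
    condBary β K (condBary β K φ) =ᵐ[P] condBary β K φ :=
  stmt9_general (mΩ := mΩ) P ℬ hℬ K hK p hp β hβ φ hφ
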